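/- A subset K of the underlying topological space X^top of a scheme X is quasi-constructible if and only if for every point x ∈ K there is a non-empty open subscheme Z of the closure of {x} (with reduced structure) such that the underlying set of Z is contained in K. -/
import Mathlib


open AlgebraicGeometry CategoryTheory CategoryTheory.Limits Opposite TopologicalSpace

universe u

noncomputable section

/-- A subset of a topological space is *quasi-constructible* if it is a
(possibly infinite) union of locally closed subsets. -/
def IsQuasiConstructible {α : Type u} [TopologicalSpace α] (K : Set α) : Prop :=
  ∃ S : Set (Set α), (∀ s ∈ S, IsLocallyClosed s) ∧ K = ⋃₀ S

/-- If `V` is open and meets `closure {x}`, then `x ∈ V`. -/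
lemma mem_of_inter_closure_nonempty {α : Type u} [TopologicalSpace α] {V : Set α} {x : α}
    (hV : IsOpen V) (h : (V ∩ closure {x}).Nonempty) : x ∈ V := by
  by_contra hx
  have hsub : closure {x} ⊆ Vᶜ :=
    closure_minimal (Set.singleton_subset_iff.mpr hx) hV.isClosed_compl
  obtain ⟨y, hyV, hyc⟩ := h
  exact hsub hyc hyV

/-- A subset `K` of the underlying space of a (locally Noetherian) scheme is
quasi-constructible iff for every `x ∈ K` there is a non-empty open subset of the
closure of `{x}` contained in `K`. -/
theorem stmt_4 (X : Scheme.{u}) [IsLocallyNoetherian X] (K : Set X) :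
    IsQuasiConstructible K ↔
      ∀ x ∈ K, ∃ V : Set X, IsOpen V ∧ (V ∩ closure {x}).Nonempty ∧
        V ∩ closure {x} ⊆ K := by
  constructor
  · rintro ⟨S, hS, rfl⟩ x hx
    obtain ⟨s, hsS, hxs⟩ := hx
    obtain ⟨U, Z, hU, hZ, rfl⟩ := hS s hsS
    refine ⟨U, hU, ⟨x, hxs.1, subset_closure rfl⟩, ?_⟩
    intro y ⟨hyU, hyc⟩
    exact Set.subset_sUnion_of_mem hsS ⟨hyU, closure_minimal
      (Set.singleton_subset_iff.mpr hxs.2) hZ hyc⟩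
  · intro h
    choose V hVopen hVne hVsub using h
    refine ⟨{s | ∃ x : X, ∃ hx : x ∈ K, s = V x hx ∩ closure {x}}, ?_, ?_⟩
    · rintro s ⟨x, hx, rfl⟩
      exact ⟨V x hx, closure {x}, hVopen x hx, isClosed_closure, rfl⟩
    · apply Set.Subset.antisymm
      · intro x hx
        exact ⟨V x hx ∩ closure {x}, ⟨x, hx, rfl⟩,
          mem_of_inter_closure_nonempty (hVopen x hx) (hVne x hx), subset_closure rfl⟩
      · rintro y ⟨s, ⟨x, hx, rfl⟩, hy⟩
        exact hVsub x hx hy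

end
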